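/- Let G be an FT-ADMG compatible with a summary causal graph G^s and let Y be a variable with scc(Y, G^s) ⊆ {Y} (no cycle through Y and another variable in G^s). Then for any vertex Y_t of G and any possible parent Z_{t_Z} ∈ PP(Y_t), there is no directed path in G from Y_t to Z_{t_Z}; i.e., no possible parent of Y_t is a strict descendant of Y_t in G. -/
import Mathlib


structure MixedGraph (V : Type*) where
  dir : V → V → Prop
  bi : V → V → Prop

namespace MixedGraph

variable {V : Type*}

/-- Edge orientation along a path step: `fwd` = u → v, `back` = u ← v, `both` = u ↔ v. -/
inductive EdgeDir | fwd | back | both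
deriving DecidableEq

/-- The step from `u` to `v` is realized by an edge of the given orientation. -/
def stepOK (G : MixedGraph V) : EdgeDir → V → V → Prop
  | .fwd, u, v => G.dir u v
  | .back, u, v => G.dir v u
  | .both, u, v => G.bi u v

/-- The step has an arrowhead at its target end. -/
def headAtTarget : EdgeDir → Prop
  | .fwd => True
  | .back => False
  | .both => True

/-- The step has an arrowhead at its source end. -/
def headAtSource : EdgeDir → Prop
  | .fwd => False
  | .back => True
  | .both => True

/-- A path in a mixed graph: a sequence of distinct vertices joined by edges. -/
structure Path (G : MixedGraph V) (n : ℕ) where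
  verts : Fin (n + 1) → V
  edges : Fin n → EdgeDir
  inj : Function.Injective verts
  ok : ∀ i : Fin n, G.stepOK (edges i) (verts i.castSucc) (verts i.succ)

/-- The internal vertex at position `i` of the path is a collider: both adjacent
path edges have an arrowhead at it. -/
def Path.collider {G : MixedGraph V} {n : ℕ} (p : Path G n) (i : ℕ) : Prop :=
  ∃ (_h0 : 0 < i) (hn : i < n),
    headAtTarget (p.edges ⟨i - 1, by omega⟩) ∧ headAtSource (p.edges ⟨i, hn⟩)

/-- `v` is a descendant of `u` (via a directed path, reflexively). -/
def descendant (G : MixedGraph V) (u v : V) : Prop :=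
  Relation.ReflTransGen G.dir u v

/-- A path is blocked by `S`: some internal non-collider is in `S`, or some collider
has no descendant (including itself) in `S`. -/
def Path.blockedBy {G : MixedGraph V} {n : ℕ} (p : Path G n) (S : Set V) : Prop :=
  (∃ i, ∃ _h0 : 0 < i, ∃ _hn : i < n,
      ¬ p.collider i ∧ p.verts ⟨i, by omega⟩ ∈ S) ∨
  (∃ i, ∃ _hn : i < n,
      p.collider i ∧ ∀ d, descendant G (p.verts ⟨i, by omega⟩) d → d ∉ S)

/-- `A` is d-separated from `B` by `S` in `G`. -/
def dsep (G : MixedGraph V) (A B S : Set V) : Prop :=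
  ∀ (n : ℕ) (p : Path G n), p.verts 0 ∈ A → p.verts (Fin.last n) ∈ B → p.blockedBy S

/-- Directed parents of a vertex. -/
def parents (G : MixedGraph V) (y : V) : Set V := {w | G.dir w y}

/-- Mutilated graph `G_{\underline{P}}`: all directed edges out of `P` removed. -/
def mutUnder (G : MixedGraph V) (P : Set V) : MixedGraph V :=
  ⟨fun u v => G.dir u v ∧ u ∉ P, G.bi⟩

/-- Mutilated graph `G_{\overline{Z}}`: all directed edges into `Z` removed. -/
def mutOver (G : MixedGraph V) (Z : Set V) : MixedGraph V :=
  ⟨fun u v => G.dir u v ∧ v ∉ Z, G.bi⟩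

end MixedGraph

/-- Directed edge of the summary causal graph of a full-time graph. -/
def summaryDir {I : Type*} (G : MixedGraph (I × ℤ)) (a b : I) : Prop :=
  ∃ s t : ℤ, G.dir (a, s) (b, t)

/-- Bidirected edge of the summary causal graph of a full-time graph. -/
def summaryBi {I : Type*} (G : MixedGraph (I × ℤ)) (a b : I) : Prop :=
  ∃ s t : ℤ, G.bi (a, s) (b, t)

/-- Possible parents of `Y_t` given summary directed edges `S` and maximal lag `γmax`. -/
def PP {I : Type*} (S : I → I → Prop) (γmax : ℕ) (Y : I) (t : ℤ) : Set (I × ℤ) :=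
  {v | (v.1 ≠ Y ∧ S v.1 Y ∧ ∃ γ : ℕ, γ ≤ γmax ∧ v.2 = t - γ) ∨
       (v.1 = Y ∧ S Y Y ∧ ∃ γ : ℕ, 0 < γ ∧ γ ≤ γmax ∧ v.2 = t - γ)}

/-- if `scc(Y, G^s) ⊆ {Y}`, then no possible parent of `Y_t` is a
strict descendant of `Y_t` in any compatible full-time graph. -/
theorem stmt5 {I : Type*} (G : MixedGraph (I × ℤ))
    (htime : ∀ u v, G.dir u v → u.2 ≤ v.2)
    (hinst : ∀ u v, G.dir u v → u.2 = v.2 → u.1 ≠ v.1)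
    (γmax : ℕ) (Y : I) (t : ℤ)
    (hscc : ∀ X : I, Relation.ReflTransGen (summaryDir G) Y X →
      Relation.ReflTransGen (summaryDir G) X Y → X = Y)
    (z : I × ℤ) (hz : z ∈ PP (summaryDir G) γmax Y t) :
    ¬ Relation.TransGen G.dir (Y, t) z := by
  intro hpath
  have key : ∀ u v : I × ℤ, Relation.TransGen G.dir u v →
      u.2 ≤ v.2 ∧ Relation.ReflTransGen (summaryDir G) u.1 v.1 := by
    intro u v h
    induction h with
    | single h => exact ⟨htime _ _ h, Relation.ReflTransGen.single ⟨_, _, h⟩⟩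
    | tail _ hedge ih =>
        exact ⟨le_trans ih.1 (htime _ _ hedge),
          ih.2.trans (Relation.ReflTransGen.single ⟨_, _, hedge⟩)⟩
  obtain ⟨hle, hsum⟩ := key _ _ hpath
  rcases hz with ⟨hne, hS, γ, hγ, hz2⟩ | ⟨heq, _, γ, hγ0, _, hz2⟩
  · exact hne (hscc z.1 hsum (Relation.ReflTransGen.single hS))
  · simp only [hz2] at hle
    omega
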